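/- Let $m \geq 2$ and let $P$ be a $2m \times 2$ complex matrix with columns $P_1, P_2$ and entries $p_{ij}$. Assume $p_{2m,1} \neq 0$, $\Delta := p_{2m-1,1} p_{2m,2} - p_{2m-1,2} p_{2m,1} \neq 0$, and $P_1^\top \Omega_{2m} P_2 = 1$. Then there exists an upper unitriangular matrix $u_2 \in \mathrm{Sp}_{2m}$ such that $u_2 P$ has all entries zero except: the $(2,1)$ entry equal to $-p_{2m,1}/\Delta$, the $(2m-1,2)$ entry equal to $-\Delta/p_{2m,1}$, and the last row equal to $(p_{2m,1}, p_{2m,2})$. -/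

import Mathlib

/-!
In block coordinates `Fin m ⊕ Fin m` the form is `Ω = [[0, F], [-F, 0]]`, and
`[[1, F S], [0, 1]] * [[F B⁻ᵀ F, 0], [0, B]]` is upper unitriangular symplectic whenever `B` is
upper unitriangular and `S` is symmetric. Write `P = [Pₜ; P_b]` and the target as `[R; Q]`.
The last two rows of `P_b` form a basis of `K²` (as `Δ ≠ 0`), so adding multiples of them to
the rows above gives a unitriangular `B` with `B P_b = Q`. It remains to find a symmetric `S`
with `S Q = F (R - α)`, where `α = F B⁻ᵀ F Pₜ`. As `Q` is supported on two rows, this is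
possible as soon as `Qᵀ F (R - α)` is symmetric, and its antisymmetric part is the difference
of the symplectic pairings of the columns of `[α; Q] = D P`, `D` the block-diagonal factor,
and of `[R; Q]`, both equal to `1`.
-/

open Matrix

/-- The matrix `Ω_{2n} = [[0, Fₙ], [-Fₙ, 0]]` of the standard symplectic form,
with `Fₙ` the antidiagonal permutation matrix. -/
noncomputable def OmegaMat (n : ℕ) : Matrix (Fin (2 * n)) (Fin (2 * n)) ℂ :=
  fun i j => if (i : ℕ) + (j : ℕ) = 2 * n - 1 then (if (i : ℕ) < n then 1 else -1) else 0

variable {K : Type*}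

def finTwoMulEquiv (m : ℕ) : Fin (2 * m) ≃ Fin m ⊕ Fin m :=
  (finCongr (two_mul m)).trans finSumFinEquiv.symm

@[simp] theorem val_finTwoMulEquiv_symm_inl {m : ℕ} (i : Fin m) :
    ((finTwoMulEquiv m).symm (Sum.inl i) : ℕ) = i := by
  simp [finTwoMulEquiv]

@[simp] theorem val_finTwoMulEquiv_symm_inr {m : ℕ} (i : Fin m) :
    ((finTwoMulEquiv m).symm (Sum.inr i) : ℕ) = m + i := by
  simp [finTwoMulEquiv, add_comm]

section CommRing

variable [CommRing K] {n : ℕ}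

variable (K n) in
def revMatrix : Matrix (Fin n) (Fin n) K := (Fin.revPerm : Equiv.Perm (Fin n)).permMatrix K

theorem revMatrix_apply (i j : Fin n) : revMatrix K n i j = if j = i.rev then 1 else 0 := by
  simp [revMatrix, PEquiv.toMatrix_apply, eq_comm]

theorem revMatrix_mul {ι : Type*} (M : Matrix (Fin n) ι K) :
    revMatrix K n * M = M.submatrix Fin.rev id :=
  PEquiv.toMatrix_toPEquiv_mul _ M

theorem mul_revMatrix {ι : Type*} [Fintype ι] (M : Matrix ι (Fin n) K) :
    M * revMatrix K n = M.submatrix id Fin.rev := by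
  rw [revMatrix, PEquiv.mul_toMatrix_toPEquiv, Fin.revPerm_symm]
  rfl

theorem transpose_revMatrix : (revMatrix K n)ᵀ = revMatrix K n := by
  rw [revMatrix, transpose_permMatrix]
  rfl

@[simp] theorem revMatrix_mul_revMatrix : revMatrix K n * revMatrix K n = 1 := by
  ext i j
  simp [revMatrix_mul, revMatrix_apply, one_apply, eq_comm]

@[simp] theorem revMatrix_mul_revMatrix_mul {ι : Type*} (M : Matrix (Fin n) ι K) :
    revMatrix K n * (revMatrix K n * M) = M := by
  rw [← Matrix.mul_assoc, revMatrix_mul_revMatrix, Matrix.one_mul]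

variable (K n) in
def symplecticForm : Matrix (Fin n ⊕ Fin n) (Fin n ⊕ Fin n) K :=
  fromBlocks 0 (revMatrix K n) (-revMatrix K n) 0

theorem OmegaMat_eq_submatrix (m : ℕ) :
    OmegaMat m = (symplecticForm ℂ m).submatrix (finTwoMulEquiv m) (finTwoMulEquiv m) := by
  ext i j
  obtain ⟨s, rfl⟩ := (finTwoMulEquiv m).symm.surjective i
  obtain ⟨t, rfl⟩ := (finTwoMulEquiv m).symm.surjective j
  rcases s with s | s <;> rcases t with t | t <;>
    simp only [OmegaMat, symplecticForm, submatrix_apply, Equiv.apply_symm_apply,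
      fromBlocks_apply₁₁, fromBlocks_apply₁₂, fromBlocks_apply₂₁,
      fromBlocks_apply₂₂, revMatrix_apply, Matrix.zero_apply, Matrix.neg_apply, Fin.ext_iff,
      Fin.val_rev,
      val_finTwoMulEquiv_symm_inl, val_finTwoMulEquiv_symm_inr] <;>
    grind

theorem dotProduct_OmegaMat_mulVec_eq {m : ℕ} (P : Matrix (Fin (2 * m)) (Fin 2) ℂ) :
    (fun i => P i 0) ⬝ᵥ (OmegaMat m).mulVec (fun i => P i 1) =
      ((P.submatrix (finTwoMulEquiv m).symm id)ᵀ * symplecticForm ℂ m *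
        P.submatrix (finTwoMulEquiv m).symm id) 0 1 := by
  have hP : (P.submatrix (finTwoMulEquiv m).symm id).submatrix (finTwoMulEquiv m) id = P := by
    ext
    simp
  rw [← submatrix_id_id (_ * _), ← submatrix_mul_equiv _ _ _ (finTwoMulEquiv m),
    ← submatrix_mul_equiv _ _ _ (finTwoMulEquiv m), ← transpose_submatrix, hP,
    ← OmegaMat_eq_submatrix, Matrix.mul_assoc, mul_apply']
  rfl

theorem transpose_mul_mul_mul_eq_of_isometry {ι κ : Type*} [Fintype ι]
    {Ω U : Matrix ι ι K} (X : Matrix ι κ K) (hU : Uᵀ * Ω * U = Ω) :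
    (U * X)ᵀ * Ω * (U * X) = Xᵀ * Ω * X :=
  calc (U * X)ᵀ * Ω * (U * X) = Xᵀ * (Uᵀ * Ω * U) * X := by
        simp only [transpose_mul, Matrix.mul_assoc]
    _ = Xᵀ * Ω * X := by rw [hU]

theorem symplectic_fromBlocks_diag {A B : Matrix (Fin n) (Fin n) K}
    (h : Aᵀ * revMatrix K n * B = revMatrix K n) :
    (fromBlocks A 0 0 B)ᵀ * symplecticForm K n * fromBlocks A 0 0 B = symplecticForm K n := by
  have h' : Bᵀ * revMatrix K n * A = revMatrix K n := by
    simpa [Matrix.mul_assoc, transpose_revMatrix] using congr_arg transpose h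
  simp [symplecticForm, fromBlocks_transpose, fromBlocks_multiply, h, h']

theorem symplectic_fromBlocks_unipotent {S : Matrix (Fin n) (Fin n) K} (hS : S.IsSymm) :
    (fromBlocks 1 (revMatrix K n * S) 0 1)ᵀ * symplecticForm K n *
      fromBlocks 1 (revMatrix K n * S) 0 1 = symplecticForm K n := by
  simp [symplecticForm, fromBlocks_transpose, fromBlocks_multiply, transpose_revMatrix,
    Matrix.mul_assoc, hS.eq]

theorem transpose_fromRows_mul_symplecticForm_mul {ι : Type*} (α β : Matrix (Fin n) ι K) :
    (fromRows α β)ᵀ * symplecticForm K n * fromRows α β =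
      αᵀ * revMatrix K n * β - βᵀ * revMatrix K n * α := by
  simp [symplecticForm, transpose_fromRows, fromCols_mul_fromBlocks, fromCols_mul_fromRows,
    Matrix.mul_assoc, sub_eq_add_neg, add_comm]

theorem transpose_mul_revMatrix_mul_sub_apply_comm {ι : Type*} {α R Q : Matrix (Fin n) ι K}
    {i j : ι}
    (h : ((fromRows α Q)ᵀ * symplecticForm K n * fromRows α Q) i j =
      ((fromRows R Q)ᵀ * symplecticForm K n * fromRows R Q) i j) :
    (Qᵀ * (revMatrix K n * (R - α))) j i = (Qᵀ * (revMatrix K n * (R - α))) i j := by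
  rw [transpose_fromRows_mul_symplecticForm_mul, transpose_fromRows_mul_symplecticForm_mul] at h
  rw [← transpose_apply (Qᵀ * _) i j]
  simp only [transpose_mul, transpose_transpose, transpose_revMatrix, Matrix.mul_sub,
    Matrix.sub_apply, transpose_sub, Matrix.mul_assoc] at h ⊢
  linear_combination -h

def twoRowMatrix {ι : Type*} [DecidableEq ι] (i₀ j₀ : ι) (x y : Fin 2 → K) :
    Matrix ι (Fin 2) K :=
  vecMulVec (Pi.single i₀ 1) x + vecMulVec (Pi.single j₀ 1) y

theorem mul_twoRowMatrix {ι κ : Type*} [Fintype ι] [DecidableEq ι] (M : Matrix κ ι K)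
    (i₀ j₀ : ι) (x y : Fin 2 → K) :
    M * twoRowMatrix i₀ j₀ x y = vecMulVec (M.col i₀) x + vecMulVec (M.col j₀) y := by
  simp [twoRowMatrix, Matrix.mul_add, mul_vecMulVec]

theorem transpose_twoRowMatrix_mul {ι κ : Type*} [Fintype ι] [DecidableEq ι]
    (M : Matrix ι κ K) (i₀ j₀ : ι) (x y : Fin 2 → K) :
    (twoRowMatrix i₀ j₀ x y)ᵀ * M = vecMulVec x (M i₀) + vecMulVec y (M j₀) := by
  simp only [twoRowMatrix, transpose_add, transpose_vecMulVec, Matrix.add_mul, vecMulVec_mul,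
    single_one_vecMul]
  rfl

end CommRing

section Unitriangular

variable [CommRing K] {ι : Type*}

def IsUpperUnitriangular [LT ι] (M : Matrix ι ι K) : Prop :=
  (∀ i, M i i = 1) ∧ M.IsUpperTriangular

theorem Matrix.IsUpperTriangular.mul_apply_self [LinearOrder ι] [Fintype ι]
    {M N : Matrix ι ι K} (hM : M.IsUpperTriangular) (hN : N.IsUpperTriangular) (i : ι) :
    (M * N) i i = M i i * N i i := by
  rw [mul_apply]
  refine Finset.sum_eq_single i (fun j _ hji => ?_) (by simp)
  rcases hji.lt_or_gt with h | h
  · rw [hM h, zero_mul]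
  · rw [hN h, mul_zero]

theorem isUpperUnitriangular_one_add [LinearOrder ι] [DecidableEq ι] {N : Matrix ι ι K}
    (hN : ∀ i j, j ≤ i → N i j = 0) : IsUpperUnitriangular (1 + N) :=
  ⟨fun i => by simp [hN i i le_rfl], fun i j (hij : j < i) => by
    simp [one_apply_ne hij.ne', hN i j hij.le]⟩

theorem vecMulVec_single_apply_eq_zero_of_le [LinearOrder ι] [DecidableEq ι] {γ : ι → K}
    {p : ι} (hγ : ∀ i, p ≤ i → γ i = 0) {i j : ι} (hji : j ≤ i) :
    vecMulVec γ (Pi.single p 1) i j = 0 := by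
  rw [vecMulVec_apply]
  by_cases hj : j = p
  · subst hj
    simp [hγ i hji]
  · simp [hj]

theorem IsUpperUnitriangular.det_eq_one [LinearOrder ι] [Fintype ι] [DecidableEq ι]
    {M : Matrix ι ι K} (hM : IsUpperUnitriangular M) : M.det = 1 := by
  simp [det_of_isUpperTriangular hM.2, hM.1]

theorem IsUpperUnitriangular.inv [LinearOrder ι] [Fintype ι] [DecidableEq ι]
    {M : Matrix ι ι K} (hM : IsUpperUnitriangular M) : IsUpperUnitriangular M⁻¹ := by
  have : Invertible M := M.invertibleOfIsUnitDet (by simp [hM.det_eq_one])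
  have hinv : M⁻¹.IsUpperTriangular := blockTriangular_inv_of_blockTriangular hM.2
  refine ⟨fun i => ?_, hinv⟩
  have := (hinv.mul_apply_self hM.2 i).symm
  rwa [inv_mul_of_invertible, one_apply_eq, hM.1, mul_one] at this

theorem IsUpperUnitriangular.revMatrix_mul_transpose_mul_revMatrix {n : ℕ}
    {M : Matrix (Fin n) (Fin n) K} (hM : IsUpperUnitriangular M) :
    IsUpperUnitriangular (revMatrix K n * Mᵀ * revMatrix K n) := by
  rw [revMatrix_mul, mul_revMatrix]
  refine ⟨fun i => hM.1 i.rev, fun i j hij => hM.2 ?_⟩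
  simpa using hij

theorem IsUpperUnitriangular.submatrix_fromBlocks {m : ℕ} {A B : Matrix (Fin m) (Fin m) K}
    (hA : IsUpperUnitriangular A) (hB : IsUpperUnitriangular B) (Y : Matrix (Fin m) (Fin m) K) :
    IsUpperUnitriangular
      ((fromBlocks A Y 0 B).submatrix (finTwoMulEquiv m) (finTwoMulEquiv m)) := by
  constructor
  · intro i
    obtain ⟨s, rfl⟩ := (finTwoMulEquiv m).symm.surjective i
    rw [submatrix_apply, Equiv.apply_symm_apply]
    rcases s with s | s
    · exact hA.1 s
    · exact hB.1 s
  · intro i j hij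
    obtain ⟨s, rfl⟩ := (finTwoMulEquiv m).symm.surjective i
    obtain ⟨t, rfl⟩ := (finTwoMulEquiv m).symm.surjective j
    rw [Fin.lt_def] at hij
    rw [submatrix_apply, Equiv.apply_symm_apply, Equiv.apply_symm_apply]
    rcases s with s | s <;> rcases t with t | t <;>
      simp only [id, val_finTwoMulEquiv_symm_inl, val_finTwoMulEquiv_symm_inr] at hij
    · exact hA.2 hij
    · omega
    · rfl
    · exact hB.2 (show (t : ℕ) < s by omega)

end Unitriangular

section Field

variable [Field K] {k : ℕ}

theorem exists_isSymm_mul_twoRowMatrix_eq {ι : Type*} [Fintype ι] [DecidableEq ι]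
    {i₀ j₀ : ι} (hij : i₀ ≠ j₀) {a b d : K} (ha : a ≠ 0) (hd : d ≠ 0)
    (W : Matrix ι (Fin 2) K)
    (hW : ((twoRowMatrix i₀ j₀ ![a, b] ![0, d])ᵀ * W) 1 0 =
      ((twoRowMatrix i₀ j₀ ![a, b] ![0, d])ᵀ * W) 0 1) :
    ∃ S : Matrix ι ι K, S.IsSymm ∧ S * twoRowMatrix i₀ j₀ ![a, b] ![0, d] = W := by
  have hW' : b * W i₀ 0 + d * W j₀ 0 = a * W i₀ 1 := by
    simpa only [transpose_twoRowMatrix_mul, Matrix.add_apply, vecMulVec_apply, cons_val_zero,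
      cons_val_one, zero_mul, add_zero] using hW
  -- columns `i₀` and `j₀` of `S` are forced, and `hW` makes them agree at `(i₀, j₀)`
  set σ : ι → K := fun i => W i 0 / a
  set τ : ι → K := fun i => (W i 1 - b * σ i) / d
  have hστ : σ j₀ = τ i₀ := by
    simp only [σ, τ]
    field_simp
    linear_combination hW'
  refine ⟨Matrix.of fun i j => if j = i₀ then σ i else if j = j₀ then τ i
    else if i = i₀ then σ j else if i = j₀ then τ j else 0, ?_, ?_⟩
  · refine IsSymm.ext fun i j => ?_
    simp only [of_apply]
    split_ifs <;> simp_all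
  · rw [mul_twoRowMatrix]
    ext i c
    simp only [Matrix.add_apply, vecMulVec_apply, col_apply, of_apply, if_true, if_neg hij.symm]
    fin_cases c
    · simp [σ, ha]
    · simp only [Fin.mk_one, cons_val_one, cons_val_fin_one, σ, τ]
      field_simp
      ring

theorem exists_isUpperUnitriangular_mul_eq_twoRowMatrix
    (X : Matrix (Fin (k + 2)) (Fin 2) K) (ha : X (Fin.last (k + 1)) 0 ≠ 0)
    (hΔ : X (Fin.last k).castSucc 0 * X (Fin.last (k + 1)) 1 -
      X (Fin.last k).castSucc 1 * X (Fin.last (k + 1)) 0 ≠ 0) :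
    ∃ B : Matrix (Fin (k + 2)) (Fin (k + 2)) K, IsUpperUnitriangular B ∧
      B * X = twoRowMatrix (Fin.last (k + 1)) (Fin.last k).castSucc
        ![X (Fin.last (k + 1)) 0, X (Fin.last (k + 1)) 1]
        ![0, -((X (Fin.last k).castSucc 0 * X (Fin.last (k + 1)) 1 -
          X (Fin.last k).castSucc 1 * X (Fin.last (k + 1)) 0) / X (Fin.last (k + 1)) 0)] := by
  set p := (Fin.last k).castSucc
  set q := Fin.last (k + 1)
  have hpq : p < q := Fin.castSucc_lt_last _
  set Δ := X p 0 * X q 1 - X p 1 * X q 0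
  -- by Cramer's rule, row `i < p` of `X` is `-γ i • X p - δ i • X q`
  set γ : Fin (k + 2) → K := fun i =>
    if i < p then -((X i 0 * X q 1 - X i 1 * X q 0) / Δ) else 0
  set δ : Fin (k + 2) → K := fun i =>
    if i < p then -((X p 0 * X i 1 - X p 1 * X i 0) / Δ) else if i = p then -(X p 0 / X q 0)
    else 0
  have hγ : ∀ i, p ≤ i → γ i = 0 := fun i hi => if_neg hi.not_gt
  have hδ : ∀ i, q ≤ i → δ i = 0 := fun i hi => by
    simp [δ, (hpq.trans_le hi).not_gt, (hpq.trans_le hi).ne']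
  refine ⟨1 + (vecMulVec γ (Pi.single p 1) + vecMulVec δ (Pi.single q 1)),
    isUpperUnitriangular_one_add fun i j hji => ?_, ?_⟩
  · rw [Matrix.add_apply, vecMulVec_single_apply_eq_zero_of_le hγ hji,
      vecMulVec_single_apply_eq_zero_of_le hδ hji, add_zero]
  · ext i c
    simp only [Matrix.add_mul, Matrix.one_mul, vecMulVec_mul, single_one_vecMul, twoRowMatrix,
      Matrix.add_apply, vecMulVec_apply, row_apply, Pi.single_apply, ← add_assoc]
    rcases lt_trichotomy i p with h | rfl | h
    · simp only [γ, δ, if_pos h, h.ne, (h.trans hpq).ne, ite_false]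
      fin_cases c <;>
        simp only [Fin.zero_eta, Fin.mk_one, cons_val_zero, cons_val_one, cons_val_fin_one,
          neg_mul, mul_neg, zero_mul, mul_zero, neg_zero, add_zero] <;>
        field_simp <;> ring
    · simp only [γ, δ, lt_irrefl, hpq.ne, ite_false, ite_true]
      fin_cases c <;>
        simp only [Fin.zero_eta, Fin.mk_one, cons_val_zero, cons_val_one, cons_val_fin_one,
          neg_mul, mul_neg, zero_mul, mul_zero, add_zero, zero_add, one_mul] <;>
        field_simp <;> ring
    · obtain rfl : i = q := Fin.ext (by
        have := i.isLt
        simp only [p, q, Fin.lt_def, Fin.val_castSucc, Fin.val_last] at h ⊢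
        omega)
      fin_cases c <;> simp [γ, δ, lt_asymm hpq, hpq.ne']

variable (k) in
/-- The target of the reduction in block coordinates; in the theorem `d = -Δ / p_{2m,1}`. -/
def normalForm (a b d : K) : Matrix (Fin (k + 2) ⊕ Fin (k + 2)) (Fin 2) K :=
  fromRows (vecMulVec (Pi.single 1 1) ![d⁻¹, 0])
    (twoRowMatrix (Fin.last (k + 1)) (Fin.last k).castSucc ![a, b] ![0, d])

theorem transpose_normalForm_mul_symplecticForm_mul {a b d : K} (hd : d ≠ 0) :
    ((normalForm k a b d)ᵀ * symplecticForm K (k + 2) * normalForm k a b d) 0 1 = 1 := by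
  rw [normalForm, transpose_fromRows_mul_symplecticForm_mul, Matrix.mul_assoc, Matrix.mul_assoc,
    revMatrix_mul, revMatrix_mul]
  simp only [Matrix.sub_apply, mul_apply, transpose_apply, submatrix_apply, id, twoRowMatrix,
    Matrix.add_apply, vecMulVec_apply, Pi.single_apply]
  have hrev : (1 : Fin (k + 2)).rev = (Fin.last k).castSucc := Fin.ext (by simp)
  simp [hrev, (Fin.castSucc_lt_last _).ne, hd]

theorem normalForm_apply_finTwoMulEquiv_zero (a b d : K) (i : Fin (2 * (k + 2))) :
    normalForm k a b d (finTwoMulEquiv (k + 2) i) 0 =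
      if (i : ℕ) = 1 then d⁻¹ else if (i : ℕ) = 2 * (k + 2) - 1 then a else 0 := by
  obtain ⟨s, rfl⟩ := (finTwoMulEquiv (k + 2)).symm.surjective i
  rcases s with s | s <;> have := s.isLt <;>
    simp [normalForm, twoRowMatrix, Pi.single_apply, Fin.ext_iff] <;>
    split_ifs <;> simp_all <;> omega

theorem normalForm_apply_finTwoMulEquiv_one (a b d : K) (i : Fin (2 * (k + 2))) :
    normalForm k a b d (finTwoMulEquiv (k + 2) i) 1 =
      if (i : ℕ) = 2 * (k + 2) - 2 then d else if (i : ℕ) = 2 * (k + 2) - 1 then b else 0 := by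
  obtain ⟨s, rfl⟩ := (finTwoMulEquiv (k + 2)).symm.surjective i
  rcases s with s | s <;> have := s.isLt <;>
    simp [normalForm, twoRowMatrix, Pi.single_apply, Fin.ext_iff] <;>
    split_ifs <;> simp_all <;> omega

theorem exists_fromBlocks_symplectic_mul_fromRows_eq_normalForm
    (Xt Xb : Matrix (Fin (k + 2)) (Fin 2) K) (ha : Xb (Fin.last (k + 1)) 0 ≠ 0)
    (hΔ : Xb (Fin.last k).castSucc 0 * Xb (Fin.last (k + 1)) 1 -
      Xb (Fin.last k).castSucc 1 * Xb (Fin.last (k + 1)) 0 ≠ 0)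
    (hX : ((fromRows Xt Xb)ᵀ * symplecticForm K (k + 2) * fromRows Xt Xb) 0 1 = 1) :
    ∃ A B Y : Matrix (Fin (k + 2)) (Fin (k + 2)) K,
      IsUpperUnitriangular A ∧ IsUpperUnitriangular B ∧
      (fromBlocks A Y 0 B)ᵀ * symplecticForm K (k + 2) * fromBlocks A Y 0 B =
        symplecticForm K (k + 2) ∧
      fromBlocks A Y 0 B * fromRows Xt Xb =
        normalForm k (Xb (Fin.last (k + 1)) 0) (Xb (Fin.last (k + 1)) 1)
          (-((Xb (Fin.last k).castSucc 0 * Xb (Fin.last (k + 1)) 1 -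
            Xb (Fin.last k).castSucc 1 * Xb (Fin.last (k + 1)) 0) / Xb (Fin.last (k + 1)) 0)) := by
  set d := -((Xb (Fin.last k).castSucc 0 * Xb (Fin.last (k + 1)) 1 -
    Xb (Fin.last k).castSucc 1 * Xb (Fin.last (k + 1)) 0) / Xb (Fin.last (k + 1)) 0)
  have hd : d ≠ 0 := neg_ne_zero.mpr (div_ne_zero hΔ ha)
  set Q := twoRowMatrix (Fin.last (k + 1)) (Fin.last k).castSucc
    ![Xb (Fin.last (k + 1)) 0, Xb (Fin.last (k + 1)) 1] ![0, d]
  set R : Matrix (Fin (k + 2)) (Fin 2) K := vecMulVec (Pi.single 1 1) ![d⁻¹, 0]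
  obtain ⟨B, hB, hBX⟩ : ∃ B, IsUpperUnitriangular B ∧ B * Xb = Q :=
    exists_isUpperUnitriangular_mul_eq_twoRowMatrix Xb ha hΔ
  set A := revMatrix K (k + 2) * B⁻¹ᵀ * revMatrix K (k + 2)
  have hD : (fromBlocks A 0 0 B)ᵀ * symplecticForm K (k + 2) * fromBlocks A 0 0 B =
      symplecticForm K (k + 2) := by
    refine symplectic_fromBlocks_diag ?_
    simp [A, transpose_mul, transpose_revMatrix, Matrix.mul_assoc,
      nonsing_inv_mul _ (hB.det_eq_one ▸ isUnit_one)]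
  have hDX : fromBlocks A 0 0 B * fromRows Xt Xb = fromRows (A * Xt) Q := by
    simp [fromBlocks_mul_fromRows, hBX]
  have hform : ((fromRows (A * Xt) Q)ᵀ * symplecticForm K (k + 2) * fromRows (A * Xt) Q) 0 1 =
      ((fromRows R Q)ᵀ * symplecticForm K (k + 2) * fromRows R Q) 0 1 := by
    rw [← hDX, transpose_mul_mul_mul_eq_of_isometry _ hD, hX]
    exact (transpose_normalForm_mul_symplecticForm_mul hd).symm
  obtain ⟨S, hS, hSQ⟩ : ∃ S : Matrix (Fin (k + 2)) (Fin (k + 2)) K,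
      S.IsSymm ∧ S * Q = revMatrix K (k + 2) * (R - A * Xt) :=
    exists_isSymm_mul_twoRowMatrix_eq (Fin.castSucc_lt_last _).ne' ha hd _
      (transpose_mul_revMatrix_mul_sub_apply_comm hform)
  have hND : fromBlocks A (revMatrix K (k + 2) * S * B) 0 B =
      fromBlocks 1 (revMatrix K (k + 2) * S) 0 1 * fromBlocks A 0 0 B := by
    simp [fromBlocks_multiply]
  refine ⟨A, B, revMatrix K (k + 2) * S * B, hB.inv.revMatrix_mul_transpose_mul_revMatrix, hB,
    ?_, ?_⟩
  · rw [hND, transpose_mul_mul_mul_eq_of_isometry _ (symplectic_fromBlocks_unipotent hS), hD]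
  · rw [hND, Matrix.mul_assoc, hDX, fromBlocks_mul_fromRows]
    simp only [Matrix.one_mul, Matrix.zero_mul, zero_add]
    rw [Matrix.mul_assoc (revMatrix K (k + 2)) S Q, hSQ, revMatrix_mul_revMatrix_mul,
      add_sub_cancel]
    rfl

end Field

/-- Lemma 4 (second matrix): if `P` is a `2m × 2` matrix with `p_{2m,1} ≠ 0`,
`Δ = p_{2m-1,1}p_{2m,2} - p_{2m-1,2}p_{2m,1} ≠ 0` and `P₁ᵀ Ω P₂ = 1`, then some
upper unitriangular symplectic `u₂` takes `P` to the matrix with `(2,1)` entry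
`-p_{2m,1}/Δ`, `(2m-1,2)` entry `-Δ/p_{2m,1}`, last row `(p_{2m,1}, p_{2m,2})`
and zeros elsewhere. -/
theorem stmt_12 (m : ℕ) (hm : 2 ≤ m) (P : Matrix (Fin (2 * m)) (Fin 2) ℂ)
    (hp : P ⟨2 * m - 1, by omega⟩ 0 ≠ 0)
    (hΔ : P ⟨2 * m - 2, by omega⟩ 0 * P ⟨2 * m - 1, by omega⟩ 1 -
        P ⟨2 * m - 2, by omega⟩ 1 * P ⟨2 * m - 1, by omega⟩ 0 ≠ 0)
    (hsymp : (fun i => P i 0) ⬝ᵥ (OmegaMat m).mulVec (fun i => P i 1) = 1) :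
    ∃ u : Matrix (Fin (2 * m)) (Fin (2 * m)) ℂ,
      (∀ i, u i i = 1) ∧
      (∀ i j : Fin (2 * m), (j : ℕ) < (i : ℕ) → u i j = 0) ∧
      uᵀ * OmegaMat m * u = OmegaMat m ∧
      (∀ i : Fin (2 * m),
        (u * P) i 0 =
          if (i : ℕ) = 1 then
            -(P ⟨2 * m - 1, by omega⟩ 0 /
              (P ⟨2 * m - 2, by omega⟩ 0 * P ⟨2 * m - 1, by omega⟩ 1 -
                P ⟨2 * m - 2, by omega⟩ 1 * P ⟨2 * m - 1, by omega⟩ 0))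
          else if (i : ℕ) = 2 * m - 1 then P ⟨2 * m - 1, by omega⟩ 0
          else 0) ∧
      (∀ i : Fin (2 * m),
        (u * P) i 1 =
          if (i : ℕ) = 2 * m - 2 then
            -((P ⟨2 * m - 2, by omega⟩ 0 * P ⟨2 * m - 1, by omega⟩ 1 -
                P ⟨2 * m - 2, by omega⟩ 1 * P ⟨2 * m - 1, by omega⟩ 0) /
              P ⟨2 * m - 1, by omega⟩ 0)
          else if (i : ℕ) = 2 * m - 1 then P ⟨2 * m - 1, by omega⟩ 1
          else 0) := by
  obtain ⟨k, rfl⟩ : ∃ k, m = k + 2 := ⟨m - 2, by omega⟩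
  set e := finTwoMulEquiv (k + 2)
  set X := P.submatrix e.symm id
  have hP : P = X.submatrix e id := by ext; simp [X]
  have hlast : e.symm (Sum.inr (Fin.last (k + 1))) = ⟨2 * (k + 2) - 1, by omega⟩ :=
    Fin.ext (by simp [e]; omega)
  have hpen : e.symm (Sum.inr (Fin.last k).castSucc) = ⟨2 * (k + 2) - 2, by omega⟩ :=
    Fin.ext (by simp [e]; omega)
  obtain ⟨A, B, Y, hA, hB, hU, hUX⟩ :=
    exists_fromBlocks_symplectic_mul_fromRows_eq_normalForm X.toRows₁ X.toRows₂
      (by simpa [X, hlast] using hp) (by simpa [X, hlast, hpen] using hΔ)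
      (by rw [fromRows_toRows, ← hsymp, dotProduct_OmegaMat_mulVec_eq])
  rw [fromRows_toRows] at hUX
  have hu := hA.submatrix_fromBlocks hB Y
  have huP : (fromBlocks A Y 0 B).submatrix e e * P = (fromBlocks A Y 0 B * X).submatrix e id := by
    rw [hP, submatrix_mul_equiv]
  refine ⟨(fromBlocks A Y 0 B).submatrix e e, hu.1, fun i j hij => hu.2 hij, ?_, fun i => ?_,
    fun i => ?_⟩
  · rw [OmegaMat_eq_submatrix, transpose_submatrix, submatrix_mul_equiv, submatrix_mul_equiv, hU]
  · rw [huP, submatrix_apply, id_eq, hUX, normalForm_apply_finTwoMulEquiv_zero, inv_neg, inv_div]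
    simp [X, hlast, hpen]
  · rw [huP, submatrix_apply, id_eq, hUX, normalForm_apply_finTwoMulEquiv_one]
    simp [X, hlast, hpen]
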